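/- arXiv:2303.01093 — 5 statements merged into one kernel-verified Lean document; each statement's English description precedes it below -/
import Mathlib

section
/- Let (a_1,...,a_r) and (b_1,...,b_s) be two nondecreasing sequences of prime numbers. If the product over i of (1 - 1/a_i) equals the product over j of (1 - 1/b_j), then r = s and a_i = b_i for all i. -/
/-!
Clearing denominators turns the hypothesis into `∏ₛ (p - 1) * ∏ₜ p = ∏ₜ (p - 1) * ∏ₛ p` in `ℕ`.
The largest prime `q` occurring in either sequence, say in `s`, divides the right-hand side but
none of the factors `p - 1` on the left (they are positive and smaller than `q`), so it occurs in
`t` as well. Cancelling `1 - 1/q` and inducting shows that the two multisets agree, and sorted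
lists with the same multiset are equal.
-/

namespace Multiset

theorem prod_map_one_sub_inv_eq_div {s : Multiset ℕ} (hs : ∀ p ∈ s, 1 ≤ p) :
    (s.map fun p : ℕ => 1 - 1 / (p : ℚ)).prod
      = (((s.map (· - 1)).prod : ℕ) : ℚ) / (s.prod : ℚ) := by
  have hs' : s.map (fun p : ℕ => 1 - 1 / (p : ℚ)) = s.map fun p => ((p - 1 : ℕ) : ℚ) / p :=
    map_congr rfl fun p hp => by
      have : (p : ℚ) ≠ 0 := by have := hs p hp; positivity
      rw [Nat.cast_sub (hs p hp), Nat.cast_one]; field_simp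
  rw [hs', prod_map_div, Nat.cast_multiset_prod, Nat.cast_multiset_prod, map_map]
  rfl

theorem _root_.Nat.Prime.not_dvd_prod_map_sub_one {q : ℕ} (hq : q.Prime) {s : Multiset ℕ}
    (hs : ∀ p ∈ s, 2 ≤ p ∧ p ≤ q) : ¬ q ∣ (s.map (· - 1)).prod := by
  intro h
  obtain ⟨_, ha, hdvd⟩ := hq.prime.exists_mem_multiset_dvd h
  obtain ⟨p, hp, rfl⟩ := mem_map.1 ha
  have := Nat.le_of_dvd (by grind) hdvd
  grind

theorem _root_.Nat.Prime.mem_of_dvd_prod {q : ℕ} (hq : q.Prime) {t : Multiset ℕ}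
    (ht : ∀ p ∈ t, p.Prime) (h : q ∣ t.prod) : q ∈ t := by
  obtain ⟨p, hp, hdvd⟩ := hq.prime.exists_mem_multiset_dvd h
  rwa [(Nat.prime_dvd_prime_iff_eq hq (ht p hp)).1 hdvd]

theorem prod_map_sub_one_mul_prod_eq {s t : Multiset ℕ}
    (hs : ∀ p ∈ s, p.Prime) (ht : ∀ p ∈ t, p.Prime)
    (h : (s.map fun p : ℕ => 1 - 1 / (p : ℚ)).prod =
      (t.map fun p : ℕ => 1 - 1 / (p : ℚ)).prod) :
    (s.map (· - 1)).prod * t.prod = (t.map (· - 1)).prod * s.prod := by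
  have cast_prod_ne_zero {u : Multiset ℕ} (hu : ∀ p ∈ u, p.Prime) : (u.prod : ℚ) ≠ 0 := by
    exact_mod_cast prod_ne_zero fun h0 => Nat.not_prime_zero (hu 0 h0)
  rw [prod_map_one_sub_inv_eq_div fun p hp => (hs p hp).one_le,
    prod_map_one_sub_inv_eq_div fun p hp => (ht p hp).one_le,
    div_eq_div_iff (cast_prod_ne_zero hs) (cast_prod_ne_zero ht)] at h
  exact_mod_cast h

theorem mem_of_prod_map_one_sub_inv_eq {s t : Multiset ℕ}
    (hs : ∀ p ∈ s, p.Prime) (ht : ∀ p ∈ t, p.Prime)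
    (h : (s.map fun p : ℕ => 1 - 1 / (p : ℚ)).prod =
      (t.map fun p : ℕ => 1 - 1 / (p : ℚ)).prod)
    {q : ℕ} (hqs : q ∈ s) (hq : ∀ p ∈ s, p ≤ q) : q ∈ t := by
  have hq_prime := hs q hqs
  have hdvd : q ∣ (s.map (· - 1)).prod * t.prod := by
    rw [prod_map_sub_one_mul_prod_eq hs ht h]
    exact (dvd_prod hqs).mul_left _
  refine hq_prime.mem_of_dvd_prod ht ((hq_prime.prime.dvd_or_dvd hdvd).resolve_left ?_)
  exact hq_prime.not_dvd_prod_map_sub_one fun p hp => ⟨(hs p hp).two_le, hq p hp⟩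

theorem eq_of_prod_map_one_sub_inv_eq {s t : Multiset ℕ}
    (hs : ∀ p ∈ s, p.Prime) (ht : ∀ p ∈ t, p.Prime)
    (h : (s.map fun p : ℕ => 1 - 1 / (p : ℚ)).prod =
      (t.map fun p : ℕ => 1 - 1 / (p : ℚ)).prod) :
    s = t := by
  induction hn : card s + card t using Nat.strong_induction_on generalizing s t with
  | _ n ih =>
    rcases eq_or_ne (s + t) 0 with hst | hst
    · obtain ⟨rfl, rfl⟩ := add_eq_zero.1 hst
      rfl
    obtain ⟨q, hq, hq_max⟩ := exists_max_image id hst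
    wlog hqs : q ∈ s generalizing s t
    · rw [add_comm] at hn hst hq hq_max
      exact (this ht hs h.symm hn hst hq hq_max (by simpa [hqs] using hq)).symm
    have hqt := mem_of_prod_map_one_sub_inv_eq hs ht h hqs fun p hp =>
      hq_max p (mem_add.2 (.inl hp))
    obtain ⟨s', rfl⟩ := exists_cons_of_mem hqs
    obtain ⟨t', rfl⟩ := exists_cons_of_mem hqt
    have hq0 : 1 - 1 / (q : ℚ) ≠ 0 := by
      rw [sub_ne_zero, ne_comm, one_div, inv_ne_one]
      exact_mod_cast (hs q hqs).one_lt.ne'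
    simp only [map_cons, prod_cons] at h
    rw [ih (card s' + card t') (by simp [← hn]; omega) (fun p hp => hs p (mem_cons_of_mem hp))
      (fun p hp => ht p (mem_cons_of_mem hp)) (mul_left_cancel₀ hq0 h) rfl]

end Multiset

theorem stmt_0 (L M : List ℕ) (hL : ∀ p ∈ L, Nat.Prime p) (hM : ∀ p ∈ M, Nat.Prime p)
    (hLs : L.Pairwise (· ≤ ·)) (hMs : M.Pairwise (· ≤ ·))
    (h : (L.map (fun p => 1 - 1 / (p : ℚ))).prod = (M.map (fun p => 1 - 1 / (p : ℚ))).prod) :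
    L = M := by
  -- `h` is elaborated with `L` and `M` coerced elementwise to `List ℚ`
  have hLM : (L : Multiset ℕ) = M := by
    refine Multiset.eq_of_prod_map_one_sub_inv_eq hL hM ?_
    simpa only [bind_pure_comp, List.map_eq_map, List.map_map, Function.comp_def,
      Multiset.map_coe, Multiset.prod_coe] using h
  exact (Multiset.coe_eq_coe.1 hLM).eq_of_pairwise' hLs hMs
end

section
/- Let G be a finite group in which, for each prime p dividing |G|, the number of elements whose order is a power of p equals the order of a Sylow p-subgroup of G. Then G is nilpotent. -/
theorem stmt_6 (G : Type*) [Group G] [Finite G]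
    (h : ∀ p : ℕ, p.Prime → p ∣ Nat.card G → ∀ P : Sylow p G,
      {g : G | ∃ k : ℕ, orderOf g = p ^ k}.ncard = Nat.card P) :
    Group.IsNilpotent G := by
  have key : ∀ (p : ℕ) (_hp : Fact p.Prime) (P : Sylow p G), (↑P : Subgroup G).Normal := by
    intro p hp P
    by_cases hdvd : p ∣ Nat.card G
    · have hsub : ((P : Subgroup G) : Set G) ⊆ {g : G | ∃ k : ℕ, orderOf g = p ^ k} := by
        intro g hg
        obtain ⟨k, hk⟩ := IsPGroup.iff_orderOf.mp P.isPGroup' ⟨g, hg⟩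
        exact ⟨k, by simpa using hk⟩
      have hcard : Nat.card P = ((P : Subgroup G) : Set G).ncard := by
        rw [← Nat.card_coe_set_eq]; rfl
      have hEq : ((P : Subgroup G) : Set G) = {g : G | ∃ k : ℕ, orderOf g = p ^ k} :=
        Set.eq_of_subset_of_ncard_le hsub (le_of_eq (by rw [h p hp.out hdvd P, hcard]))
          (Set.toFinite _)
      constructor
      intro n hn g
      have : n ∈ {g : G | ∃ k : ℕ, orderOf g = p ^ k} := hEq ▸ hn
      obtain ⟨k, hk⟩ := this
      have : g * n * g⁻¹ ∈ {g : G | ∃ k : ℕ, orderOf g = p ^ k} := ⟨k, by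
        simpa [hk] using
          orderOf_injective (MulAut.conj g).toMonoidHom (MulAut.conj g).injective n⟩
      rwa [← hEq] at this
    · have : Nat.card P = 1 := by
        rw [Sylow.card_eq_multiplicity,
          Nat.factorization_eq_zero_of_not_dvd hdvd, pow_zero]
      have hbot : (P : Subgroup G) = ⊥ := Subgroup.eq_bot_of_card_eq _ this
      rw [hbot]; infer_instance
  exact ((isNilpotent_of_finite_tfae (G := G)).out 3 0).mp key
end

section
/- Let G and H be finite non-abelian groups with |G| = |H|. Suppose there is a bijection φ from G \ Z(G) to H \ Z(H) such that for every g in G \ Z(G), the number of elements of G \ Z(G) not commuting with g equals the number of elements of H \ Z(H) not commuting with φ(g). Then |Z(G)| = |Z(H)|, and for every g in G \ Z(G), the conjugacy class of g in G has the same size as the conjugacy class of φ(g) in H. -/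
open MulAction

lemma aux_conj_card {G : Type*} [Group G] [Finite G] (g : G) :
    {x : G | IsConj g x}.ncard * Nat.card (Subgroup.centralizer ({g} : Set G)) = Nat.card G := by
  classical
  have := Fintype.ofFinite G
  have hset : {x : G | IsConj g x} = orbit (ConjAct G) g := by
    ext x
    rw [Set.mem_setOf_eq, ConjAct.mem_orbit_conjAct, isConj_comm]
  have hcent : Nat.card (Subgroup.centralizer ({g} : Set G)) =
      Nat.card (stabilizer (ConjAct G) g) := by
    apply Nat.card_congr
    exact Equiv.subtypeEquiv ConjAct.toConjAct.toEquiv (fun k => by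
      rw [Subgroup.centralizer_eq_comap_stabilizer]; rfl)
  rw [hset, hcent, ← Nat.card_coe_set_eq]
  simp only [Nat.card_eq_fintype_card]
  exact MulAction.card_orbit_mul_card_stabilizer_eq_card_group (ConjAct G) g

lemma aux_noncomm_card {G : Type*} [Group G] [Finite G] (g : G) :
    {x : G | x ∉ Subgroup.center G ∧ ¬ Commute x g}.ncard =
      Nat.card G - Nat.card (Subgroup.centralizer ({g} : Set G)) := by
  classical
  have := Fintype.ofFinite G
  have hset : {x : G | x ∉ Subgroup.center G ∧ ¬ Commute x g} =
      (Subgroup.centralizer ({g} : Set G) : Set G)ᶜ := by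
    have hc : ∀ x : G, x ∈ Subgroup.centralizer ({g} : Set G) ↔ Commute x g := fun x => by
      rw [Subgroup.mem_centralizer_singleton_iff]
      exact ⟨fun h => h, fun h => h⟩
    ext x
    simp only [Set.mem_setOf_eq, Set.mem_compl_iff, SetLike.mem_coe, hc]
    constructor
    · exact fun h => h.2
    · intro h
      exact ⟨fun hx => h (((Subgroup.mem_center_iff.mp hx) g).symm), h⟩
  have := Set.ncard_add_ncard_compl (Subgroup.centralizer ({g} : Set G) : Set G)
  have hcc : (Subgroup.centralizer ({g} : Set G) : Set G).ncard =
      Nat.card (Subgroup.centralizer ({g} : Set G)) := by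
    rw [← Nat.card_coe_set_eq]
    rfl
  rw [hset]
  omega

lemma aux_cent_le {G : Type*} [Group G] [Finite G] (K : Subgroup G) :
    Nat.card K ≤ Nat.card G :=
  Nat.card_le_card_of_injective _ Subtype.val_injective

theorem stmt_7 (G H : Type*) [Group G] [Group H] [Finite G] [Finite H]
    (hGna : ¬ ∀ a b : G, a * b = b * a) (hHna : ¬ ∀ a b : H, a * b = b * a)
    (hcard : Nat.card G = Nat.card H)
    (φ : {g : G // g ∉ Subgroup.center G} ≃ {h : H // h ∉ Subgroup.center H})
    (hdeg : ∀ g : {g : G // g ∉ Subgroup.center G},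
      {x : G | x ∉ Subgroup.center G ∧ ¬ Commute x g.1}.ncard =
        {y : H | y ∉ Subgroup.center H ∧ ¬ Commute y (φ g).1}.ncard) :
    Nat.card (Subgroup.center G) = Nat.card (Subgroup.center H) ∧
      ∀ g : {g : G // g ∉ Subgroup.center G},
        {x : G | IsConj g.1 x}.ncard = {y : H | IsConj (φ g).1 y}.ncard := by
  classical
  constructor
  · -- centers have equal cardinality
    have h1 : Nat.card {g : G // g ∉ Subgroup.center G} =
        Nat.card {h : H // h ∉ Subgroup.center H} := Nat.card_congr φ
    have h2 : Nat.card {g : G // g ∉ Subgroup.center G} =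
        Nat.card G - Nat.card (Subgroup.center G) := by
      have := Fintype.ofFinite G
      simp only [Nat.card_eq_fintype_card]
      rw [Fintype.card_subtype_compl]
    have h3 : Nat.card {h : H // h ∉ Subgroup.center H} =
        Nat.card H - Nat.card (Subgroup.center H) := by
      have := Fintype.ofFinite H
      simp only [Nat.card_eq_fintype_card]
      rw [Fintype.card_subtype_compl]
    have hG := aux_cent_le (Subgroup.center G)
    have hH := aux_cent_le (Subgroup.center H)
    omega
  · intro g
    have hd := hdeg g
    rw [aux_noncomm_card g.1, aux_noncomm_card (φ g).1] at hd
    have hGc := aux_cent_le (Subgroup.centralizer ({g.1} : Set G))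
    have hHc := aux_cent_le (Subgroup.centralizer ({(φ g).1} : Set H))
    have hcent : Nat.card (Subgroup.centralizer ({g.1} : Set G)) =
        Nat.card (Subgroup.centralizer ({(φ g).1} : Set H)) := by omega
    have e1 := aux_conj_card g.1
    have e2 := aux_conj_card (φ g).1
    have hpos : 0 < Nat.card (Subgroup.centralizer ({g.1} : Set G)) := Nat.card_pos
    rw [hcent] at e1 hpos
    rw [hcard] at e1
    exact Nat.eq_of_mul_eq_mul_right hpos (e1.trans e2.symm)
end

section
/- Let p be a prime and P a 2-generated non-cyclic p-group of order p^n. Then the graph Δ(P), whose vertices are the elements of P outside the Frattini subgroup Φ(P), with distinct vertices adjacent iff they do not generate P, has exactly p+1 connected components, each of which is a complete graph on p^{n-2}(p-1) vertices. In particular Δ(P) has an isolated vertex if and only if P ≅ C₂ × C₂. -/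
/-- The complement of the generating graph of `P`, restricted to elements outside
the Frattini subgroup: distinct vertices are adjacent iff they do not generate `P`. -/
def deltaGraph (P : Type*) [Group P] : SimpleGraph {x : P // x ∉ frattini P} where
  Adj a b := a ≠ b ∧ Subgroup.closure {a.1, b.1} ≠ ⊤
  symm := by
    constructor
    rintro a b ⟨hab, h⟩
    exact ⟨hab.symm, by rwa [Set.pair_comm]⟩
  loopless := by constructor; rintro a ⟨h, -⟩; exact h rfl

/-!
Modulo `Φ(P)` a finite `p`-group is elementary abelian, because every maximal subgroup is normal
of index `p`; as `P` is 2-generated and not cyclic, `V = P / Φ(P)` has order `p²`. Generation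
can be tested modulo `Φ(P)`, and two non-trivial elements of `V` generate `V` unless they span
the same line. Hence `x, y ∉ Φ(P)` are adjacent in `Δ(P)` exactly when their images span the
same one of the `p + 1` lines of `V`: the components are the preimages of the punctured lines,
cliques with `|Φ(P)| (p - 1) = p ^ (n - 2) (p - 1)` vertices, and such a clique is a single
vertex only when `p = n = 2`, that is, when `P` is a Klein four-group.
-/

open Subgroup

theorem Nat.card_eq_card_mul_of_ncard_fiber_eq {α β : Type*} [Finite α] [Finite β] (g : α → β)
    {k : ℕ} (hg : ∀ b, {a | g a = b}.ncard = k) : Nat.card α = Nat.card β * k := by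
  have := Fintype.ofFinite β
  calc Nat.card α = ∑ b, Nat.card {a // g a = b} := by
        rw [← Nat.card_congr (Equiv.sigmaFiberEquiv g), Nat.card_sigma]
    _ = ∑ _b : β, k := Finset.sum_congr rfl fun b _ ↦ hg b
    _ = Nat.card β * k := by simp

theorem QuotientGroup.ncard_preimage_mk {G : Type*} [Group G] (N : Subgroup G) (t : Set (G ⧸ N)) :
    (QuotientGroup.mk ⁻¹' t : Set G).ncard = Nat.card N * t.ncard := by
  rw [← Nat.card_coe_set_eq, Nat.card_congr (preimageMkEquivSubgroupProdSet N t),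
    Nat.card_prod, Nat.card_coe_set_eq]

theorem Commute.card_le_orderOf_mul_orderOf {G : Type*} [Group G] [Finite G] {a b : G}
    (hab : Commute a b) (hgen : closure {a, b} = ⊤) : Nat.card G ≤ orderOf a * orderOf b := by
  let f := (zpowers a).subtype.noncommCoprod (zpowers b).subtype <| by
    rintro ⟨-, i, rfl⟩ ⟨-, j, rfl⟩
    exact hab.zpow_zpow i j
  have hf : f.range = ⊤ := by
    refine eq_top_iff.mpr (hgen ▸ (closure_le _).mpr ?_)
    rintro x (rfl | rfl)
    · exact ⟨(⟨x, mem_zpowers x⟩, 1), by simp [f]⟩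
    · exact ⟨(1, ⟨x, mem_zpowers x⟩), by simp [f]⟩
  calc Nat.card G ≤ Nat.card (zpowers a × zpowers b) :=
        Nat.card_le_card_of_surjective f (MonoidHom.range_eq_top.mp hf)
    _ = orderOf a * orderOf b := by rw [Nat.card_prod, Nat.card_zpowers, Nat.card_zpowers]

namespace SimpleGraph

variable {V β : Type*} {G : SimpleGraph V} {f : V → β}

theorem connectedComponentMk_eq_iff_of_adj_iff (hG : ∀ v w, G.Adj v w ↔ v ≠ w ∧ f v = f w)
    {v w : V} : G.connectedComponentMk v = G.connectedComponentMk w ↔ f v = f w := by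
  rw [ConnectedComponent.eq, reachable_iff_reflTransGen]
  constructor
  · intro h
    induction h with
    | refl => rfl
    | tail _ hadj ih => exact ih.trans ((hG _ _).mp hadj).2
  · intro h
    obtain rfl | hne := eq_or_ne v w
    · exact .refl
    · exact .single ((hG v w).mpr ⟨hne, h⟩)

theorem forall_not_adj_iff_of_adj_iff (hG : ∀ v w, G.Adj v w ↔ v ≠ w ∧ f v = f w) {v : V} :
    (∀ w, ¬G.Adj v w) ↔ {w | G.connectedComponentMk w = G.connectedComponentMk v}.ncard = 1 := by
  rw [Set.ncard_eq_one]
  constructor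
  · refine fun h ↦ ⟨v, Set.ext fun w ↦ ⟨fun hw ↦ ?_, fun hw ↦ hw ▸ rfl⟩⟩
    by_contra hne
    exact h w ((hG v w).mpr
      ⟨Ne.symm hne, ((connectedComponentMk_eq_iff_of_adj_iff hG).mp hw).symm⟩)
  · rintro ⟨u, hu⟩ w hvw
    have hv : v ∈ {w | G.connectedComponentMk w = G.connectedComponentMk v} := rfl
    have hw : w ∈ {w | G.connectedComponentMk w = G.connectedComponentMk v} :=
      (ConnectedComponent.connectedComponentMk_eq_of_adj hvw).symm
    rw [hu, Set.mem_singleton_iff] at hv hw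
    exact hvw.ne (hv.trans hw.symm)

end SimpleGraph

theorem mem_frattini_iff {G : Type*} [Group G] {x : G} :
    x ∈ frattini G ↔ ∀ M : Subgroup G, IsCoatom M → x ∈ M := by
  simp [frattini, Order.radical, mem_iInf]

section Frattini

variable {G : Type*} [Group G] [Finite G]

theorem closure_image_mk_frattini_eq_top_iff {s : Set G} :
    closure (((↑) : G → G ⧸ frattini G) '' s) = ⊤ ↔ closure s = ⊤ := by
  rw [← QuotientGroup.coe_mk', ← MonoidHom.map_closure]
  constructor
  · intro h
    apply frattini_nongenerating
    rw [← QuotientGroup.ker_mk' (frattini G), ← comap_map_eq, h, comap_top]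
  · intro h
    rw [h, map_top_of_surjective _ (QuotientGroup.mk'_surjective _)]

theorem isCyclic_of_isCyclic_quotient_frattini (h : IsCyclic (G ⧸ frattini G)) : IsCyclic G := by
  obtain ⟨g, hg⟩ := isCyclic_iff_exists_zpowers_eq_top.mp h
  obtain ⟨x, rfl⟩ := QuotientGroup.mk_surjective g
  refine isCyclic_iff_exists_zpowers_eq_top.mpr ⟨x, ?_⟩
  rw [zpowers_eq_closure, ← closure_image_mk_frattini_eq_top_iff, Set.image_singleton,
    ← zpowers_eq_closure, hg]

end Frattini

namespace IsPGroup

variable {p : ℕ} [hp : Fact p.Prime] {G : Type*} [Group G] [Finite G]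

theorem index_eq_of_isCoatom (hG : IsPGroup p G) {M : Subgroup G} (hM : IsCoatom M) :
    M.index = p := by
  obtain ⟨k, hk⟩ := iff_card.mp (hG.to_subgroup M)
  obtain ⟨j, hj⟩ := hG.index M
  have hj0 : j ≠ 0 := by rintro rfl; exact hM.1 (index_eq_one.mp hj)
  have hdvd : p ^ (k + 1) ∣ Nat.card G := by
    rw [← card_mul_index M, hk, hj, pow_succ]
    exact mul_dvd_mul_left _ (dvd_pow_self p hj0)
  obtain ⟨K, hK, hMK⟩ := Sylow.exists_subgroup_card_pow_succ hdvd hk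
  -- a subgroup of order `p * |M|` above `M` must be `G` by maximality
  have hKtop : K = ⊤ := hM.2 K <| hMK.lt_of_ne <| by
    rintro rfl
    exact k.succ_ne_self (Nat.pow_right_injective hp.out.two_le (hK.symm.trans hk))
  have := card_mul_index M
  rw [← card_top (G := G), ← hKtop, hK, hk, pow_succ] at this
  exact Nat.eq_of_mul_eq_mul_left (pow_pos hp.out.pos k) this

theorem normal_of_isCoatom (hG : IsPGroup p G) {M : Subgroup G} (hM : IsCoatom M) : M.Normal :=
  have := hG.isNilpotent
  Group.normalizerCondition_of_isNilpotent.normal_of_coatom M hM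

theorem quotient_frattini_pow_eq_one (hG : IsPGroup p G) (v : G ⧸ frattini G) : v ^ p = 1 := by
  induction v using QuotientGroup.induction_on with | H x => ?_
  rw [← QuotientGroup.mk_pow, QuotientGroup.eq_one_iff, mem_frattini_iff]
  intro M hM
  have := hG.normal_of_isCoatom hM
  simpa [hG.index_eq_of_isCoatom hM] using M.pow_index_mem x

theorem quotient_frattini_commute (hG : IsPGroup p G) (v w : G ⧸ frattini G) : Commute v w := by
  induction v using QuotientGroup.induction_on with | H x => ?_
  induction w using QuotientGroup.induction_on with | H y => ?_
  rw [Commute, SemiconjBy, ← QuotientGroup.mk_mul, ← QuotientGroup.mk_mul, QuotientGroup.eq,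
    mem_frattini_iff]
  intro M hM
  have := hG.normal_of_isCoatom hM
  have : IsCyclic (G ⧸ M) := isCyclic_of_prime_card (p := p) <| by
    rw [← index_eq_card, hG.index_eq_of_isCoatom hM]
  let := IsCyclic.commGroup (α := G ⧸ M)
  rw [← QuotientGroup.eq, QuotientGroup.mk_mul, QuotientGroup.mk_mul, mul_comm]

theorem card_quotient_frattini (hG : IsPGroup p G) (hgen : ∃ a b : G, closure {a, b} = ⊤)
    (hnc : ¬IsCyclic G) : Nat.card (G ⧸ frattini G) = p ^ 2 := by
  obtain ⟨a, b, hab⟩ := hgen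
  have hle : Nat.card (G ⧸ frattini G) ≤ p ^ 2 := calc
    _ ≤ orderOf (a : G ⧸ frattini G) * orderOf (b : G ⧸ frattini G) :=
      (hG.quotient_frattini_commute _ _).card_le_orderOf_mul_orderOf
        (by rwa [← Set.image_pair, closure_image_mk_frattini_eq_top_iff])
    _ ≤ p * p := Nat.mul_le_mul
      (orderOf_le_of_pow_eq_one hp.out.pos (hG.quotient_frattini_pow_eq_one _))
      (orderOf_le_of_pow_eq_one hp.out.pos (hG.quotient_frattini_pow_eq_one _))
    _ = p ^ 2 := (sq p).symm
  have hVnc : ¬IsCyclic (G ⧸ frattini G) := fun h ↦ hnc (isCyclic_of_isCyclic_quotient_frattini h)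
  obtain ⟨k, hk⟩ := iff_card.mp (hG.to_quotient (frattini G))
  have hk2 : k ≤ 2 := (Nat.pow_le_pow_iff_right hp.out.one_lt).mp (hk ▸ hle)
  interval_cases k
  · have := (Nat.card_eq_one_iff_unique.mp (hk.trans (pow_zero p))).1
    exact absurd isCyclic_of_subsingleton hVnc
  · exact absurd (isCyclic_of_prime_card (hk.trans (pow_one p))) hVnc
  · exact hk

end IsPGroup

section ExponentPrime

variable {p : ℕ} [hp : Fact p.Prime] {V : Type*} [Group V] [Finite V]

theorem zpowers_eq_of_mem_of_pow_eq_one (hexp : ∀ v : V, v ^ p = 1) {v w : V} (hw : w ≠ 1)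
    (hmem : w ∈ zpowers v) : zpowers w = zpowers v :=
  eq_of_le_of_card_ge (zpowers_le.mpr hmem) <| by
    rw [Nat.card_zpowers, Nat.card_zpowers, orderOf_eq_prime (hexp w) hw]
    exact orderOf_le_of_pow_eq_one hp.out.pos (hexp v)

theorem ncard_setOf_zpowers_eq (hexp : ∀ v : V, v ^ p = 1) {v : V} (hv : v ≠ 1) :
    {w | zpowers w = zpowers v}.ncard = p - 1 := by
  have hset : {w | zpowers w = zpowers v} = (zpowers v : Set V) \ {1} := by
    ext w
    refine ⟨fun hw ↦ ⟨hw ▸ mem_zpowers w, ?_⟩,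
      fun hw ↦ zpowers_eq_of_mem_of_pow_eq_one hexp hw.2 hw.1⟩
    rintro rfl
    exact hv (zpowers_eq_bot.mp ((hw : zpowers 1 = zpowers v).symm.trans zpowers_one_eq_bot))
  rw [hset, Set.ncard_sdiff_singleton_of_mem (one_mem _), ← Nat.card_coe_set_eq,
    SetLike.coe_sort_coe, Nat.card_zpowers, orderOf_eq_prime (hexp v) hv]

theorem closure_pair_eq_top_iff_zpowers_ne (hV : Nat.card V = p ^ 2)
    (hexp : ∀ v : V, v ^ p = 1) {v w : V} (hv : v ≠ 1) (hw : w ≠ 1) :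
    closure {v, w} = ⊤ ↔ zpowers v ≠ zpowers w := by
  have hvp : Nat.card (zpowers v) = p := by rw [Nat.card_zpowers, orderOf_eq_prime (hexp v) hv]
  constructor
  · intro htop heq
    have hle : closure {v, w} ≤ zpowers v := by
      rw [closure_le]
      rintro x (rfl | rfl)
      exacts [mem_zpowers x, heq ▸ mem_zpowers x]
    have := card_le_of_le hle
    rw [htop, card_top, hV, hvp] at this
    nlinarith [hp.out.two_le]
  · intro hne
    have hvmem : v ∈ closure {v, w} := subset_closure (Set.mem_insert v _)
    obtain ⟨j, hj, hcard⟩ :=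
      (Nat.dvd_prime_pow hp.out).mp (hV ▸ card_subgroup_dvd_card (closure {v, w}))
    interval_cases j
    · rw [pow_zero, card_eq_one] at hcard
      exact (hv (mem_bot.mp (hcard ▸ hvmem))).elim
    · have heq := eq_of_le_of_card_ge (zpowers_le.mpr hvmem) (by rw [hcard, hvp, pow_one])
      have hwmem : w ∈ zpowers v := heq ▸ subset_closure (Set.mem_insert_of_mem v rfl)
      exact absurd (zpowers_eq_of_mem_of_pow_eq_one hexp hw hwmem).symm hne
    · exact eq_top_of_card_eq _ (hcard.trans hV.symm)

end ExponentPrime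

section deltaGraph

variable {p : ℕ} [hp : Fact p.Prime] {P : Type*} [Group P] [Finite P]

theorem deltaGraph_adj_iff (hP : IsPGroup p P) (hV : Nat.card (P ⧸ frattini P) = p ^ 2)
    (v w : {x : P // x ∉ frattini P}) :
    (deltaGraph P).Adj v w ↔
      v ≠ w ∧ zpowers (v.1 : P ⧸ frattini P) = zpowers (w.1 : P ⧸ frattini P) := by
  have hne (x : {x : P // x ∉ frattini P}) : (x.1 : P ⧸ frattini P) ≠ 1 :=
    (QuotientGroup.eq_one_iff _).not.mpr x.2
  change v ≠ w ∧ ¬closure {v.1, w.1} = ⊤ ↔ _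
  rw [← closure_image_mk_frattini_eq_top_iff, Set.image_pair,
    closure_pair_eq_top_iff_zpowers_ne hV hP.quotient_frattini_pow_eq_one (hne v) (hne w), not_not]

theorem deltaGraph_connectedComponentMk_eq_iff (hP : IsPGroup p P)
    (hV : Nat.card (P ⧸ frattini P) = p ^ 2) {v w : {x : P // x ∉ frattini P}} :
    (deltaGraph P).connectedComponentMk v = (deltaGraph P).connectedComponentMk w ↔
      zpowers (v.1 : P ⧸ frattini P) = zpowers (w.1 : P ⧸ frattini P) :=
  SimpleGraph.connectedComponentMk_eq_iff_of_adj_iff (deltaGraph_adj_iff hP hV)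

theorem deltaGraph_ncard_connectedComponent (hP : IsPGroup p P)
    (hV : Nat.card (P ⧸ frattini P) = p ^ 2) (c : (deltaGraph P).ConnectedComponent) :
    {v | (deltaGraph P).connectedComponentMk v = c}.ncard = Nat.card (frattini P) * (p - 1) := by
  induction c using SimpleGraph.ConnectedComponent.ind with | h u => ?_
  have hu : (u.1 : P ⧸ frattini P) ≠ 1 := (QuotientGroup.eq_one_iff _).not.mpr u.2
  have hset : Subtype.val '' {v | (deltaGraph P).connectedComponentMk v =
      (deltaGraph P).connectedComponentMk u} =
      QuotientGroup.mk ⁻¹' {y | zpowers y = zpowers (u.1 : P ⧸ frattini P)} := by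
    ext x
    constructor
    · rintro ⟨v, hv, rfl⟩
      exact (deltaGraph_connectedComponentMk_eq_iff hP hV).mp hv
    · intro hx
      have hxΦ : x ∉ frattini P := by
        rw [← QuotientGroup.eq_one_iff]
        intro h
        have hx' : zpowers (x : P ⧸ frattini P) = zpowers (u.1 : P ⧸ frattini P) := hx
        rw [h, zpowers_one_eq_bot] at hx'
        exact hu (zpowers_eq_bot.mp hx'.symm)
      exact ⟨⟨x, hxΦ⟩, (deltaGraph_connectedComponentMk_eq_iff hP hV).mpr hx, rfl⟩
  rw [← Set.ncard_image_of_injective _ Subtype.val_injective, hset,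
    QuotientGroup.ncard_preimage_mk, ncard_setOf_zpowers_eq hP.quotient_frattini_pow_eq_one hu]

theorem deltaGraph_card_connectedComponent (hP : IsPGroup p P)
    (hV : Nat.card (P ⧸ frattini P) = p ^ 2) :
    Nat.card (deltaGraph P).ConnectedComponent = p + 1 := by
  obtain ⟨q, rfl⟩ : ∃ q, p = q + 1 := ⟨p - 1, (Nat.sub_add_cancel hp.out.one_lt.le).symm⟩
  have hfib := Nat.card_eq_card_mul_of_ncard_fiber_eq (deltaGraph P).connectedComponentMk
    (deltaGraph_ncard_connectedComponent hP hV)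
  have hsplit : Nat.card (frattini P) + Nat.card {x : P // x ∉ frattini P} =
      Nat.card (frattini P) * (q + 1) ^ 2 := by
    rw [← hV, mul_comm, ← card_eq_card_quotient_mul_card_subgroup]
    exact Set.ncard_add_ncard_compl _
  have hq : 0 < Nat.card (frattini P) * q :=
    Nat.mul_pos Nat.card_pos (by have := hp.out.two_le; omega)
  rw [hfib, Nat.add_sub_cancel] at hsplit
  exact Nat.eq_of_mul_eq_mul_right hq (by linarith)

theorem deltaGraph_exists_isolated_iff (hP : IsPGroup p P)
    (hV : Nat.card (P ⧸ frattini P) = p ^ 2) :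
    (∃ v, ∀ w, ¬(deltaGraph P).Adj v w) ↔ Nat.card P = 4 := by
  obtain ⟨c⟩ : Nonempty (deltaGraph P).ConnectedComponent :=
    (Nat.card_pos_iff.mp (by rw [deltaGraph_card_connectedComponent hP hV]; omega)).1
  have : Nonempty {x : P // x ∉ frattini P} := ⟨c.out⟩
  simp only [SimpleGraph.forall_not_adj_iff_of_adj_iff (deltaGraph_adj_iff hP hV),
    deltaGraph_ncard_connectedComponent hP hV, exists_const]
  rw [card_eq_card_quotient_mul_card_subgroup (frattini P), hV]
  have hp2 := hp.out.two_le
  have hc : 0 < Nat.card (frattini P) := Nat.card_pos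
  constructor
  · intro h
    obtain ⟨hc1, hp1⟩ := mul_eq_one.mp h
    rw [hc1, show p = 2 by omega]; rfl
  · intro h
    obtain rfl : p = 2 := by nlinarith
    omega

end deltaGraph

theorem nonempty_mulEquiv_kleinFour_iff {G : Type*} [Group G] (hG : ¬IsCyclic G) :
    Nonempty (G ≃* Multiplicative (ZMod 2) × Multiplicative (ZMod 2)) ↔ Nat.card G = 4 := by
  constructor
  · rintro ⟨e⟩
    rw [Nat.card_congr e.toEquiv]
    simp
  · intro h4
    have : IsKleinFour G := ⟨h4, (not_isCyclic_iff_exponent_eq_prime Nat.prime_two h4).mp hG⟩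
    obtain ⟨e⟩ := IsKleinFour.nonempty_mulEquiv (G₁ := G) (G₂ := Multiplicative (ZMod 2 × ZMod 2))
    exact ⟨e.trans (MulEquiv.prodMultiplicative _ _)⟩

theorem stmt_9 (p n : ℕ) (hp : p.Prime) (P : Type*) [Group P] [Finite P]
    (hP : IsPGroup p P) (hcard : Nat.card P = p ^ n)
    (h2gen : ∃ a b : P, Subgroup.closure {a, b} = ⊤) (hnc : ¬ IsCyclic P) :
    Nat.card (deltaGraph P).ConnectedComponent = p + 1 ∧
      (∀ c : (deltaGraph P).ConnectedComponent,
        {v | (deltaGraph P).connectedComponentMk v = c}.ncard = p ^ (n - 2) * (p - 1) ∧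
        ∀ v w, (deltaGraph P).connectedComponentMk v = c →
          (deltaGraph P).connectedComponentMk w = c → v ≠ w → (deltaGraph P).Adj v w) ∧
      ((∃ v, ∀ w, ¬ (deltaGraph P).Adj v w) ↔
        Nonempty (P ≃* Multiplicative (ZMod 2) × Multiplicative (ZMod 2))) := by
  have := Fact.mk hp
  have hV := hP.card_quotient_frattini h2gen hnc
  have hΦ : Nat.card (frattini P) = p ^ (n - 2) := by
    obtain ⟨j, hj⟩ := IsPGroup.iff_card.mp (hP.to_subgroup (frattini P))
    have hjn : 2 + j = n := Nat.pow_right_injective hp.two_le <| by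
      dsimp only
      rw [pow_add, ← hV, ← hj, ← card_eq_card_quotient_mul_card_subgroup, hcard]
    rw [hj, ← hjn, Nat.add_sub_cancel_left]
  refine ⟨deltaGraph_card_connectedComponent hP hV, fun c ↦ ⟨?_, ?_⟩, ?_⟩
  · rw [deltaGraph_ncard_connectedComponent hP hV, hΦ]
  · intro v w hv hw hvw
    exact (deltaGraph_adj_iff hP hV v w).mpr
      ⟨hvw, (deltaGraph_connectedComponentMk_eq_iff hP hV).mp (hv.trans hw.symm)⟩
  · rw [deltaGraph_exists_isolated_iff hP hV, nonempty_mulEquiv_kleinFour_iff hnc]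
end

section
/- Let H be a finite group such that |H| is square-free and such that for every pair of distinct primes p, q dividing |H|, H contains an element of order pq. Then H is cyclic. -/
private lemma sqfree_dvd_aux {n m : ℕ} (hn : Squarefree n) (hm : m ≠ 0)
    (h : ∀ p : ℕ, p.Prime → p ∣ n → p ∣ m) : n ∣ m := by
  rw [← Nat.factorization_le_iff_dvd hn.ne_zero hm]
  intro p
  by_cases hp : p.Prime ∧ p ∣ n
  · calc n.factorization p ≤ 1 := hn.natFactorization_le_one p
      _ ≤ m.factorization p := (hp.1.factorization_pos_of_dvd hm (h p hp.1 hp.2))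
  · have : p ∉ n.factorization.support := by
      rw [Nat.support_factorization]
      intro hmem
      exact hp ⟨Nat.prime_of_mem_primeFactors hmem, Nat.dvd_of_mem_primeFactors hmem⟩
    simp [Finsupp.notMem_support_iff.mp this]

private lemma conj_orderOf {G : Type*} [Group G] (g x : G) :
    orderOf (g * x * g⁻¹) = orderOf x :=
  (SemiconjBy.orderOf_eq g (by simp [SemiconjBy, mul_assoc] : SemiconjBy g x (g * x * g⁻¹))).symm

theorem stmt_13 (H : Type*) [Group H] [Finite H] (hsf : Squarefree (Nat.card H))
    (h : ∀ p q : ℕ, p.Prime → q.Prime → p ≠ q → p ∣ Nat.card H → q ∣ Nat.card H →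
      ∃ x : H, orderOf x = p * q) : IsCyclic H := by
  have hcard0 : Nat.card H ≠ 0 := Nat.card_pos.ne'
  -- every element of prime order is central
  have key : ∀ (x : H) (p : ℕ), p.Prime → orderOf x = p → x ∈ Subgroup.center H := by
    intro x p hp hx
    set C := Subgroup.centralizer ({x} : Set H) with hC
    have hxC : x ∈ C := Subgroup.mem_centralizer_iff.mpr (by rintro y rfl; rfl)
    have hdvd : ∀ q : ℕ, q.Prime → q ∣ Nat.card H → q ∣ Nat.card C := by
      intro q hq hqd
      have hpd : p ∣ Nat.card H := hx ▸ orderOf_dvd_natCard x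
      by_cases hpq : q = p
      · subst hpq
        have : orderOf (⟨x, hxC⟩ : C) = q := by rw [Subgroup.orderOf_mk, hx]
        exact this ▸ orderOf_dvd_natCard _
      · obtain ⟨z, hz⟩ := h p q hp hq (fun e => hpq e.symm) hpd hqd
        have ha : orderOf (z ^ q) = p := by
          have h1 : (p * q).gcd q = q := Nat.gcd_eq_right ⟨p, mul_comm p q⟩
          rw [orderOf_pow, hz, h1, Nat.mul_div_cancel _ hq.pos]
        have hb : orderOf (z ^ p) = q := by
          have h1 : (p * q).gcd p = p := Nat.gcd_eq_right ⟨q, rfl⟩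
          rw [orderOf_pow, hz, h1, Nat.mul_div_cancel_left _ hp.pos]
        have : Fact p.Prime := ⟨hp⟩
        have hfac : (Nat.card H).factorization p = 1 :=
          le_antisymm (hsf.natFactorization_le_one p)
            (hp.factorization_pos_of_dvd hcard0 hpd)
        have cx : Nat.card (Subgroup.zpowers x) = p ^ (Nat.card H).factorization p := by
          rw [hfac, pow_one, Nat.card_zpowers, hx]
        have ca : Nat.card (Subgroup.zpowers (z ^ q)) = p ^ (Nat.card H).factorization p := by
          rw [hfac, pow_one, Nat.card_zpowers, ha]
        obtain ⟨g, hg⟩ := MulAction.exists_smul_eq H (Sylow.ofCard _ ca) (Sylow.ofCard _ cx)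
        have hmem : g * z ^ q * g⁻¹ ∈ Subgroup.zpowers x := by
          have h1 : (↑(g • Sylow.ofCard _ ca) : Subgroup H) = Subgroup.zpowers x := by
            rw [hg, Sylow.coe_ofCard]
          rw [← h1, Sylow.coe_subgroup_smul]
          have : g * z ^ q * g⁻¹ = MulAut.conj g • (z ^ q) := by
            simp [MulAut.conj]
          rw [this]
          exact Subgroup.smul_mem_pointwise_smul _ _ _ (by rw [Sylow.coe_ofCard]; exact Subgroup.mem_zpowers _)
        set a := g * z ^ q * g⁻¹ with ha'
        have hax : Subgroup.zpowers a = Subgroup.zpowers x := by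
          apply Subgroup.eq_of_le_of_card_ge
          · rwa [Subgroup.zpowers_le]
          · rw [Nat.card_zpowers, Nat.card_zpowers, hx, ha', conj_orderOf, ha]
        have hxa : x ∈ Subgroup.zpowers a := hax ▸ Subgroup.mem_zpowers x
        obtain ⟨k, hk⟩ := hxa
        have hcomm : Commute (g * z ^ p * g⁻¹) a := by
          rw [ha']
          simpa [MulAut.conj, mul_assoc] using
            (((Commute.refl z).pow_pow p q).map (MulAut.conj g).toMonoidHom)
        have hcx : Commute (g * z ^ p * g⁻¹) x := by
          rw [← hk]; exact (hcomm.zpow_right k)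
        have hbC : g * z ^ p * g⁻¹ ∈ C :=
          Subgroup.mem_centralizer_iff.mpr (by rintro y rfl; exact hcx.symm.eq)
        have : orderOf (⟨g * z ^ p * g⁻¹, hbC⟩ : C) = q := by
          rw [Subgroup.orderOf_mk, conj_orderOf, hb]
        exact this ▸ orderOf_dvd_natCard _
    have hdC : Nat.card H ∣ Nat.card C :=
      sqfree_dvd_aux hsf Nat.card_pos.ne' hdvd
    have hCtop : C = ⊤ := Subgroup.eq_top_of_card_eq _
      (Nat.dvd_antisymm (Subgroup.card_subgroup_dvd_card C) hdC)
    rw [Subgroup.mem_center_iff]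
    intro y
    have : y ∈ C := hCtop ▸ Subgroup.mem_top y
    exact (Subgroup.mem_centralizer_iff.mp this x rfl).symm
  -- the center is everything
  have hcen : Subgroup.center H = ⊤ := by
    apply Subgroup.eq_top_of_card_eq
    apply Nat.dvd_antisymm (Subgroup.card_subgroup_dvd_card _)
    apply sqfree_dvd_aux hsf Nat.card_pos.ne'
    intro q hq hqd
    have : Fact q.Prime := ⟨hq⟩
    obtain ⟨y, hy⟩ := exists_prime_orderOf_dvd_card' (G := H) q hqd
    have hyc : y ∈ Subgroup.center H := key y q hq hy
    have : orderOf (⟨y, hyc⟩ : Subgroup.center H) = q := by rw [Subgroup.orderOf_mk, hy]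
    exact this ▸ orderOf_dvd_natCard _
  letI : CommGroup H := Group.commGroupOfCenterEqTop hcen
  apply IsCyclic.of_exponent_eq_card
  apply Nat.dvd_antisymm Group.exponent_dvd_nat_card
  apply sqfree_dvd_aux hsf Monoid.ExponentExists.of_finite.exponent_ne_zero
  intro q hq hqd
  have : Fact q.Prime := ⟨hq⟩
  obtain ⟨y, hy⟩ := exists_prime_orderOf_dvd_card' (G := H) q hqd
  exact hy ▸ Monoid.order_dvd_exponent y
end
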